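/- Point-on-side comparison for lower curvature bound, κ = 0 case: Let L be a complete length metric space satisfying the CBB(0) comparison. Let p, x, y, z ∈ L with x ≠ y and dist(x,z) + dist(z,y) = dist(x,y) (z lies between x and y). Put a = dist(x,y) and s = dist(x,z). Then dist(p,z)² ≥ ((a − s)·dist(p,x)² + s·dist(p,y)²)/a − s·(a − s); i.e. dist(p,z) is at least the distance from the model vertex p̃ to the corresponding point z̃ on the side [x̃ỹ] of the Euclidean comparison triangle. -/
import Mathlib


/-- Comparison angle (model angle for curvature `0`) at `p` between `x` and `y`. -/
noncomputable def cmpAngle {X : Type*} [MetricSpace X] (p x y : X) : ℝ :=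
  Real.arccos ((dist p x ^ 2 + dist p y ^ 2 - dist x y ^ 2) / (2 * dist p x * dist p y))

/-- The CBB(0) four-point comparison: curvature `≥ 0` in the sense of Alexandrov. -/
def CBB0Cmp (X : Type*) [MetricSpace X] : Prop :=
  ∀ p x₁ x₂ x₃ : X, p ≠ x₁ → p ≠ x₂ → p ≠ x₃ →
    cmpAngle p x₁ x₂ + cmpAngle p x₂ x₃ + cmpAngle p x₃ x₁ ≤ 2 * Real.pi

/-- The CAT(0) four-point comparison. -/
def CAT0Cmp (X : Type*) [MetricSpace X] : Prop :=
  ∀ p₁ p₂ x₁ x₂ : X, p₁ ≠ p₂ → p₁ ≠ x₁ → p₁ ≠ x₂ → p₂ ≠ x₁ → p₂ ≠ x₂ →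
    cmpAngle p₁ x₁ x₂ ≤ cmpAngle p₁ p₂ x₁ + cmpAngle p₁ p₂ x₂ ∨
    cmpAngle p₂ x₁ x₂ ≤ cmpAngle p₂ p₁ x₁ + cmpAngle p₂ p₁ x₂

/-- Midpoint characterization of the length condition (for complete spaces). -/
def LengthMid (X : Type*) [MetricSpace X] : Prop :=
  ∀ x y : X, ∀ ε : ℝ, 0 < ε → ∃ z : X,
    dist x z ≤ dist x y / 2 + ε ∧ dist z y ≤ dist x y / 2 + ε

/-- A geodesic from `p` to `q`, affinely parametrized by `[0,1]`. -/
def IsGeodesicP {X : Type*} [MetricSpace X] (γ : ℝ → X) (p q : X) : Prop :=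
  γ 0 = p ∧ γ 1 = q ∧
    ∀ s ∈ Set.Icc (0:ℝ) 1, ∀ t ∈ Set.Icc (0:ℝ) 1, dist (γ s) (γ t) = |s - t| * dist p q

/-- A metrically convex subset: together with any two points it contains
every point lying between them. -/
def MConvexSet {X : Type*} [MetricSpace X] (K : Set X) : Prop :=
  ∀ x ∈ K, ∀ y ∈ K, ∀ z : X, dist x z + dist z y = dist x y → z ∈ K

lemma cos_cmpAngle {X : Type*} [MetricSpace X] (p x y : X) (hx : p ≠ x) (hy : p ≠ y) :
    Real.cos (cmpAngle p x y) =
      (dist p x ^ 2 + dist p y ^ 2 - dist x y ^ 2) / (2 * dist p x * dist p y) := by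
  have ha : 0 < dist p x := dist_pos.2 hx
  have hb : 0 < dist p y := dist_pos.2 hy
  have h1 : dist x y ≤ dist p x + dist p y := by
    rw [dist_comm p x]; exact dist_triangle x p y
  have h2 : dist p x ≤ dist x y + dist p y := by
    have := dist_triangle p y x; rw [dist_comm y x] at this; linarith
  have h3 : dist p y ≤ dist p x + dist x y := dist_triangle p x y
  have hc : 0 ≤ dist x y := dist_nonneg
  apply Real.cos_arccos
  · rw [le_div_iff₀ (by positivity)]; nlinarith
  · rw [div_le_one (by positivity)]; nlinarith

theorem point_on_side_CBB0 {L : Type*} [MetricSpace L] [CompleteSpace L]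
    (hlen : LengthMid L) (hcbb : CBB0Cmp L)
    (p x y z : L) (hxy : x ≠ y) (hz : dist x z + dist z y = dist x y) :
    dist p z ^ 2 ≥
      ((dist x y - dist x z) * dist p x ^ 2 + dist x z * dist p y ^ 2) / dist x y
        - dist x z * (dist x y - dist x z) := by
  have ha : 0 < dist x y := dist_pos.2 hxy
  rcases eq_or_ne z x with rfl | hzx
  · simp only [dist_self, sub_zero, zero_mul, add_zero, mul_zero]
    rw [ge_iff_le, mul_comm, mul_div_assoc, div_self ha.ne', mul_one]
  rcases eq_or_ne z y with rfl | hzy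
  · simp only [sub_self, zero_mul, zero_add, mul_zero, sub_zero, ge_iff_le]
    rw [mul_comm, mul_div_assoc, div_self ha.ne', mul_one]
  rcases eq_or_ne z p with rfl | hzp
  · rw [dist_self, dist_comm z x]
    have ht : dist z y = dist x y - dist x z := by linarith
    rw [ht]
    have : ((dist x y - dist x z) * dist x z ^ 2 + dist x z * (dist x y - dist x z) ^ 2) /
        dist x y = dist x z * (dist x y - dist x z) := by
      field_simp; ring
    rw [this]
    simp
  -- main case
  have hs : 0 < dist x z := dist_pos.2 fun h => hzx h.symm |>.elim
  have ht : 0 < dist z y := dist_pos.2 hzy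
  have hd : 0 < dist z p := dist_pos.2 hzp
  have hfour := hcbb z x p y hzx hzp hzy
  have hπ : cmpAngle z y x = Real.pi := by
    unfold cmpAngle
    have : (dist z y ^ 2 + dist z x ^ 2 - dist y x ^ 2) / (2 * dist z y * dist z x) = -1 := by
      rw [dist_comm z x, dist_comm y x, ← hz]
      field_simp; ring
    rw [this, Real.arccos_neg_one]
  rw [hπ] at hfour
  set α := cmpAngle z x p with hα
  set β := cmpAngle z p y with hβ
  have hαβ : α + β ≤ Real.pi := by linarith
  have hα0 : 0 ≤ α := Real.arccos_nonneg _
  have hβ0 : 0 ≤ β := Real.arccos_nonneg _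
  have hcos : Real.cos (Real.pi - β) ≤ Real.cos α :=
    Real.cos_le_cos_of_nonneg_of_le_pi hα0 (by linarith) (by linarith)
  rw [Real.cos_pi_sub] at hcos
  rw [hα, cos_cmpAngle z x p hzx hzp, hβ, cos_cmpAngle z p y hzp hzy] at hcos
  rw [dist_comm z x, dist_comm z p, dist_comm x p] at hcos
  -- hcos : -( (d²+t²-Q²)/(2d t) ) ≤ (s²+d²-P²)/(2 s d)
  have key : 0 ≤ dist z y * (dist x z ^ 2 + dist p z ^ 2 - dist p x ^ 2)
      + dist x z * (dist p z ^ 2 + dist z y ^ 2 - dist p y ^ 2) := by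
    have hd' : 0 < dist p z := by rw [dist_comm]; exact hd
    rw [← neg_div] at hcos
    have := (div_le_div_iff₀ (mul_pos (mul_pos two_pos hd') ht)
      (mul_pos (mul_pos two_pos hs) hd')).1 hcos
    nlinarith [hd', this]
  rw [ge_iff_le, sub_le_iff_le_add, div_le_iff₀ ha, ← hz]
  nlinarith [sq_nonneg (dist p z), mul_pos hs ht]
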